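/- Let f : {0,1}^n → {0,1} be a non-constant symmetric function and let t_f be the minimum value such that f is constant on inputs with Hamming weight in [t_f, n - t_f]. Then the spectral norm of the adjacency matrix of the sensitivity graph of f is at least sqrt(t_f · (n + 1 - t_f)). -/

import Mathlib

/-!
By minimality of `t`, the weight profile `g` jumps between two consecutive weights `j` and `j + 1`
with `t ≤ j + 1 ≤ n + 1 - t`. Every edge of the cube between these two layers is then sensitive.
The bipartite graph they form is biregular with degrees `n - j` and `j + 1`, so a vector
constant on each layer is stretched by `√((j + 1) (n - j))`; since the adjacency matrix is
nonnegative, the remaining sensitive edges can only increase its image. Finally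
`k (n + 1 - k) ≥ t (n + 1 - t)` for `t ≤ k ≤ n + 1 - t`.
-/

open Finset

/-- Hamming weight of a Boolean string. -/
def wt {n : ℕ} (x : Fin n → Bool) : ℕ := (univ.filter (fun i => x i = true)).card

/-- The threshold function with threshold `k` on `n` bits. -/
def Tk (n k : ℕ) (x : Fin n → Bool) : Bool := decide (k ≤ wt x)

/-- Flip the `i`-th bit of `x`. -/
def flipBit {n : ℕ} (x : Fin n → Bool) (i : Fin n) : Fin n → Bool := Function.update x i (!x i)

/-- Sensitivity of `f` at input `x`. -/
def sens {n : ℕ} (f : (Fin n → Bool) → Bool) (x : Fin n → Bool) : ℕ :=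
  (univ.filter (fun i => f (flipBit x i) ≠ f x)).card

/-- Adjacency matrix of the sensitivity graph of `f`. -/
def adjMat {n : ℕ} (f : (Fin n → Bool) → Bool) : Matrix (Fin n → Bool) (Fin n → Bool) ℝ :=
  fun x y => if hammingDist x y = 1 ∧ f x ≠ f y then 1 else 0

/-- Euclidean norm of a real vector indexed by a finite type. -/
noncomputable def enorm {ι : Type*} [Fintype ι] (v : ι → ℝ) : ℝ :=
  Real.sqrt (∑ i, v i ^ 2)

/-- Spectral norm of a real matrix, as the maximal stretch of a nonzero vector. -/
noncomputable def specNorm {ι : Type*} [Fintype ι] [DecidableEq ι] (A : Matrix ι ι ℝ) : ℝ :=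
  sSup {r : ℝ | ∃ v : ι → ℝ, v ≠ 0 ∧ r = _root_.enorm (A.mulVec v) / _root_.enorm v}

open Matrix

section SpectralNorm

variable {ι : Type*} [Fintype ι]

lemma enorm_eq_norm_toLp (v : ι → ℝ) : _root_.enorm v = ‖WithLp.toLp 2 v‖ := by
  simp [_root_.enorm, EuclideanSpace.norm_eq]

lemma enorm_pos_of_ne_zero {v : ι → ℝ} (hv : v ≠ 0) : 0 < _root_.enorm v := by
  simpa [enorm_eq_norm_toLp] using hv

variable [DecidableEq ι]

lemma le_specNorm (A : Matrix ι ι ℝ) {v : ι → ℝ} (hv : v ≠ 0) :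
    _root_.enorm (A *ᵥ v) / _root_.enorm v ≤ specNorm A := by
  refine le_csSup ⟨‖Matrix.toEuclideanCLM (𝕜 := ℝ) A‖, ?_⟩ ⟨v, hv, rfl⟩
  rintro r ⟨w, hw, rfl⟩
  rw [div_le_iff₀ (enorm_pos_of_ne_zero hw), enorm_eq_norm_toLp, enorm_eq_norm_toLp,
    ← Matrix.toEuclideanCLM_toLp]
  exact (toEuclideanCLM (𝕜 := ℝ) A).le_opNorm _

lemma sqrt_le_specNorm (A : Matrix ι ι ℝ) {v : ι → ℝ} (hv : v ≠ 0) {c : ℝ}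
    (h : ∀ i, c * v i ^ 2 ≤ (A *ᵥ v) i ^ 2) : √c ≤ specNorm A := by
  refine le_trans ?_ (le_specNorm A hv)
  rw [le_div_iff₀ (enorm_pos_of_ne_zero hv), _root_.enorm, _root_.enorm,
    ← Real.sqrt_mul' _ (sum_nonneg fun i _ => sq_nonneg (v i)), mul_sum]
  exact Real.sqrt_le_sqrt (sum_le_sum fun i _ => h i)

end SpectralNorm

section HammingCube

variable {n : ℕ}

lemma wt_le (x : Fin n → Bool) : wt x ≤ n := by
  simpa [wt] using card_filter_le univ fun i => x i = true

lemma card_filter_eq_false (x : Fin n → Bool) : #{i | x i = false} = n - wt x := by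
  have := card_filter_add_card_filter_not (s := univ) fun i : Fin n => x i = true
  simp only [Bool.not_eq_true, card_univ, Fintype.card_fin] at this
  rw [wt]
  omega

lemma exists_wt_eq {m : ℕ} (hm : m ≤ n) : ∃ x : Fin n → Bool, wt x = m :=
  ⟨fun i => decide ((i : ℕ) < m), by simp [wt, Fin.card_filter_val_lt, hm]⟩

lemma flipBit_apply_self (x : Fin n → Bool) (i : Fin n) : flipBit x i i = !x i :=
  Function.update_self _ _ _

lemma flipBit_apply_of_ne (x : Fin n → Bool) {i j : Fin n} (h : j ≠ i) : flipBit x i j = x j :=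
  Function.update_of_ne h _ _

lemma flipBit_injective (x : Fin n → Bool) : Function.Injective (flipBit x) := by
  intro i j hij
  by_contra hne
  have := congrFun hij i
  rw [flipBit_apply_self, flipBit_apply_of_ne x hne] at this
  cases x i <;> simp at this

lemma hammingDist_flipBit (x : Fin n → Bool) (i : Fin n) : hammingDist x (flipBit x i) = 1 := by
  rw [hammingDist, card_eq_one]
  refine ⟨i, eq_singleton_iff_unique_mem.2 ⟨?_, fun j hj => ?_⟩⟩
  · simp [flipBit_apply_self]
  · by_contra hji
    simp [flipBit_apply_of_ne x hji] at hj

lemma wt_flipBit_of_false {x : Fin n → Bool} {i : Fin n} (hx : x i = false) :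
    wt (flipBit x i) = wt x + 1 := by
  have : univ.filter (fun j => flipBit x i j = true) =
      insert i (univ.filter fun j => x j = true) := by
    ext j
    by_cases hji : j = i
    · subst hji; simp [flipBit_apply_self, hx]
    · simp [flipBit_apply_of_ne x hji, hji]
  rw [wt, this, card_insert_of_notMem (by simp [hx]), wt]

lemma wt_flipBit_of_true {x : Fin n → Bool} {i : Fin n} (hx : x i = true) :
    wt (flipBit x i) + 1 = wt x := by
  have : univ.filter (fun j => flipBit x i j = true) =
      (univ.filter fun j => x j = true).erase i := by
    ext j
    by_cases hji : j = i
    · subst hji; simp [flipBit_apply_self, hx]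
    · simp [flipBit_apply_of_ne x hji, hji]
  rw [wt, this, card_erase_add_one (by simp [hx]), wt]

end HammingCube

section SensitivityGraph

variable {n : ℕ} (f : (Fin n → Bool) → Bool)

lemma adjMat_nonneg (x y : Fin n → Bool) : 0 ≤ adjMat f x y := by
  unfold adjMat; split_ifs <;> norm_num

lemma adjMat_flipBit {x : Fin n → Bool} {i : Fin n} (h : f (flipBit x i) ≠ f x) :
    adjMat f x (flipBit x i) = 1 :=
  if_pos ⟨hammingDist_flipBit x i, h.symm⟩

lemma card_mul_le_adjMat_mulVec {v : (Fin n → Bool) → ℝ} (hv : 0 ≤ v) (x : Fin n → Bool)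
    {I : Finset (Fin n)} {c : ℝ} (hI : ∀ i ∈ I, f (flipBit x i) ≠ f x ∧ v (flipBit x i) = c) :
    #I * c ≤ (adjMat f *ᵥ v) x :=
  calc #I * c = ∑ i ∈ I, adjMat f x (flipBit x i) * v (flipBit x i) := by
        rw [sum_congr rfl fun i hi => by rw [adjMat_flipBit f (hI i hi).1, (hI i hi).2, one_mul],
          sum_const, nsmul_eq_mul]
    _ = ∑ y ∈ I.image (flipBit x), adjMat f x y * v y :=
        (sum_image (f := fun y => adjMat f x y * v y)
          fun i _ j _ h => flipBit_injective x h).symm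
    _ ≤ ∑ y, adjMat f x y * v y :=
        sum_le_sum_of_subset_of_nonneg (subset_univ _) fun y _ _ =>
          mul_nonneg (adjMat_nonneg f x y) (hv y)
    _ = (adjMat f *ᵥ v) x := rfl

end SensitivityGraph

section SymmetricFunction

variable {n j : ℕ}

/-- A Perron eigenvector of the biregular bipartite graph between the layers `j` and `j + 1` of
the cube (degrees `n - j` and `j + 1`), for the eigenvalue `√((j + 1) (n - j))`. -/
noncomputable def twoLayerVec (n j : ℕ) : (Fin n → Bool) → ℝ :=
  fun x => if wt x = j then √((n : ℝ) - j) else if wt x = j + 1 then √((j : ℝ) + 1) else 0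

lemma twoLayerVec_of_wt_eq {x : Fin n → Bool} (hx : wt x = j) :
    twoLayerVec n j x = √((n : ℝ) - j) :=
  if_pos hx

lemma twoLayerVec_of_wt_eq_succ {x : Fin n → Bool} (hx : wt x = j + 1) :
    twoLayerVec n j x = √((j : ℝ) + 1) :=
  (if_neg (by omega)).trans (if_pos hx)

lemma twoLayerVec_nonneg : 0 ≤ twoLayerVec n j := by
  intro x
  unfold twoLayerVec
  split_ifs <;> positivity

lemma twoLayerVec_ne_zero (hj : j < n) : twoLayerVec n j ≠ 0 := by
  obtain ⟨x, hx⟩ := exists_wt_eq hj.le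
  refine Function.ne_iff.2 ⟨x, ?_⟩
  have : (j : ℝ) < n := by exact_mod_cast hj
  rw [twoLayerVec_of_wt_eq hx, Pi.zero_apply]
  positivity

variable {g : ℕ → Bool} {f : (Fin n → Bool) → Bool} (hf : ∀ x, f x = g (wt x))
  (hg : g j ≠ g (j + 1))
include hf hg

lemma le_adjMat_mulVec_twoLayerVec_of_wt_eq {x : Fin n → Bool} (hx : wt x = j) :
    ((n : ℝ) - j) * √((j : ℝ) + 1) ≤ (adjMat f *ᵥ twoLayerVec n j) x := by
  have := card_mul_le_adjMat_mulVec f twoLayerVec_nonneg x (I := {i | x i = false})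
      (c := √((j : ℝ) + 1)) fun i hi => by
    have hwt : wt (flipBit x i) = j + 1 := by
      rw [wt_flipBit_of_false (mem_filter.1 hi).2, hx]
    refine ⟨by rw [hf, hf, hwt, hx]; exact hg.symm, twoLayerVec_of_wt_eq_succ hwt⟩
  rwa [card_filter_eq_false, hx, Nat.cast_sub (hx ▸ wt_le x)] at this

lemma le_adjMat_mulVec_twoLayerVec_of_wt_eq_succ {x : Fin n → Bool} (hx : wt x = j + 1) :
    ((j : ℝ) + 1) * √((n : ℝ) - j) ≤ (adjMat f *ᵥ twoLayerVec n j) x := by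
  have := card_mul_le_adjMat_mulVec f twoLayerVec_nonneg x (I := {i | x i = true})
      (c := √((n : ℝ) - j)) fun i hi => by
    have hwt : wt (flipBit x i) = j := by
      have := wt_flipBit_of_true (mem_filter.1 hi).2; omega
    refine ⟨by rw [hf, hf, hwt, hx]; exact hg, twoLayerVec_of_wt_eq hwt⟩
  rwa [show #{i | x i = true} = wt x from rfl, hx, Nat.cast_succ] at this

lemma sq_twoLayerVec_le_sq_adjMat_mulVec (x : Fin n → Bool) :
    ((j + 1) * ((n : ℝ) - j)) * twoLayerVec n j x ^ 2 ≤
      (adjMat f *ᵥ twoLayerVec n j) x ^ 2 := by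
  by_cases hx : wt x = j
  · have hjn : (j : ℝ) ≤ n := by exact_mod_cast hx ▸ wt_le x
    have h := le_adjMat_mulVec_twoLayerVec_of_wt_eq hf hg hx
    rw [twoLayerVec_of_wt_eq hx]
    calc ((j + 1) * ((n : ℝ) - j)) * √((n : ℝ) - j) ^ 2
        = (((n : ℝ) - j) * √((j : ℝ) + 1)) ^ 2 := by
          rw [mul_pow, Real.sq_sqrt (by linarith), Real.sq_sqrt (by positivity)]; ring
      _ ≤ _ := pow_le_pow_left₀ (by nlinarith [Real.sqrt_nonneg ((j : ℝ) + 1)]) h 2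
  by_cases hx' : wt x = j + 1
  · have hjn : (j : ℝ) + 1 ≤ n := by exact_mod_cast hx' ▸ wt_le x
    have h := le_adjMat_mulVec_twoLayerVec_of_wt_eq_succ hf hg hx'
    rw [twoLayerVec_of_wt_eq_succ hx']
    calc ((j + 1) * ((n : ℝ) - j)) * √((j : ℝ) + 1) ^ 2
        = (((j : ℝ) + 1) * √((n : ℝ) - j)) ^ 2 := by
          rw [mul_pow, Real.sq_sqrt (by positivity), Real.sq_sqrt (by linarith)]; ring
      _ ≤ _ := pow_le_pow_left₀ (by positivity) h 2
  simp only [twoLayerVec, hx, hx', if_false]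
  simpa using sq_nonneg ((adjMat f *ᵥ twoLayerVec n j) x)

lemma sqrt_le_specNorm_adjMat_of_ne_succ (hj : j < n) :
    √((j + 1) * ((n : ℝ) - j)) ≤ specNorm (adjMat f) :=
  sqrt_le_specNorm _ (twoLayerVec_ne_zero hj) (sq_twoLayerVec_le_sq_adjMat_mulVec hf hg)

end SymmetricFunction

lemma exists_ne_succ_of_ne {α : Type*} (g : ℕ → α) {a b : ℕ} (h : g a ≠ g b) :
    ∃ j, min a b ≤ j ∧ j < max a b ∧ g j ≠ g (j + 1) := by
  wlog hab : a ≤ b generalizing a b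
  · obtain ⟨j, hj⟩ := this h.symm (by omega)
    exact ⟨j, by rwa [min_comm, max_comm]⟩
  by_contra! hc
  suffices ∀ m, a ≤ m → m ≤ b → g a = g m from h (this b hab le_rfl)
  intro m ham
  induction m, ham using Nat.le_induction with
  | base => exact fun _ => rfl
  | succ m ham ih => exact fun hmb => (ih (by omega)).trans (hc m (by omega) (by omega))

lemma exists_ne_succ_of_isLeast {n t : ℕ} {g : ℕ → Bool} (ht0 : t ≠ 0)
    (ht : IsLeast {s : ℕ | ∀ a b : ℕ, s ≤ a → a ≤ n - s → s ≤ b → b ≤ n - s → g a = g b} t) :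
    ∃ j, t ≤ j + 1 ∧ j + t ≤ n ∧ g j ≠ g (j + 1) := by
  have hpred : ¬ ∀ a b : ℕ, t - 1 ≤ a → a ≤ n - (t - 1) → t - 1 ≤ b → b ≤ n - (t - 1) →
      g a = g b :=
    fun h => by have := ht.2 h; omega
  push Not at hpred
  obtain ⟨a, b, ha, ha', hb, hb', hab⟩ := hpred
  obtain ⟨j, hj, hj', hjump⟩ := exists_ne_succ_of_ne g hab
  exact ⟨j, by omega, by omega, hjump⟩

theorem specNorm_symm_lower (n : ℕ) (g : ℕ → Bool) (f : (Fin n → Bool) → Bool)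
    (hf : ∀ x, f x = g (wt x)) (hnc : ∃ x y : Fin n → Bool, f x ≠ f y) (t : ℕ)
    (ht : IsLeast {s : ℕ | ∀ a b : ℕ, s ≤ a → a ≤ n - s → s ≤ b → b ≤ n - s → g a = g b} t) :
    Real.sqrt ((t : ℝ) * ((n : ℝ) + 1 - t)) ≤ specNorm (adjMat f) := by
  have ht0 : t ≠ 0 := by
    rintro rfl
    obtain ⟨x, y, hxy⟩ := hnc
    refine hxy ?_
    rw [hf, hf]
    exact ht.1 _ _ (Nat.zero_le _) (wt_le x) (Nat.zero_le _) (wt_le y)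
  obtain ⟨j, htj, hjt, hjump⟩ := exists_ne_succ_of_isLeast ht0 ht
  have hle : (t : ℝ) * ((n : ℝ) + 1 - t) ≤ (j + 1) * ((n : ℝ) - j) := by
    have h1 : (t : ℝ) ≤ j + 1 := by exact_mod_cast htj
    have h2 : (j : ℝ) + t ≤ n := by exact_mod_cast hjt
    nlinarith
  calc Real.sqrt ((t : ℝ) * ((n : ℝ) + 1 - t)) ≤ √((j + 1) * ((n : ℝ) - j)) :=
        Real.sqrt_le_sqrt hle
    _ ≤ specNorm (adjMat f) := sqrt_le_specNorm_adjMat_of_ne_succ hf hjump (by omega)
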